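/- Let p* > 0 and define the operator V on the space of continuous functions on [α₀, ξ] by V(u)(η) = (1 + p*·Φ(η, u))/(1 + p*·Φ(ξ, u)) for η ∈ [α₀, ξ]. Then for all continuous u, u* : [α₀, ξ] → ℝ one has ‖V(u) − V(u*)‖ ≤ 2·p*·Φ̃(α₀, ξ)·‖u − u*‖, where ‖·‖ denotes the supremum norm on [α₀, ξ]. -/

import Mathlib

open Real MeasureTheory Set

/-- `E(η,u) = exp(−(2/a)·∫_{α₀}^{η} s·N*(u(s))/L*(u(s)) ds)` -/
noncomputable def Efun (a : ℝ) (L N : ℝ → ℝ) (α₀ : ℝ) (u : ℝ → ℝ) (η : ℝ) : ℝ :=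
  Real.exp (-(2 / a) * ∫ s in α₀..η, s * N (u s) / L (u s))

/-- `Φ(η,u) = α₀^ν·∫_{α₀}^{η} E(v,u)/(v^ν·L*(u(v))) dv` -/
noncomputable def Phi (a ν : ℝ) (L N : ℝ → ℝ) (α₀ : ℝ) (u : ℝ → ℝ) (η : ℝ) : ℝ :=
  α₀ ^ ν * ∫ v in α₀..η, Efun a L N α₀ u v / (v ^ ν * L (u v))

/-- Supremum norm on the interval `[α₀, ξ]`. -/
noncomputable def supNorm (α₀ ξ : ℝ) (f : ℝ → ℝ) : ℝ :=
  ⨆ η : Icc α₀ ξ, |f η|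

/-- The Lipschitz bound `Φ̃(α₀, η)` from Lemma 4. -/
noncomputable def PhiTilde (a ν Lm NM Ltil Ntil α₀ η : ℝ) : ℝ :=
  (α₀ ^ ν / Lm ^ 2) *
    ((1 / a) * (Ntil + NM * Ltil / Lm) *
        (η ^ (3 - ν) / (3 - ν) - α₀ ^ 2 * η ^ (1 - ν) / (1 - ν) +
          2 * α₀ ^ (3 - ν) / ((3 - ν) * (1 - ν))) +
      Ltil * (η ^ (1 - ν) - α₀ ^ (1 - ν)) / (1 - ν))

/-!
The integrand `s N*(u s) / L*(u s)` of the exponent is Lipschitz in `u` with constant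
`s (Ñ + N_M L̃ / L_m) / L_m`. Since the exponent is nonpositive and `exp` is `1`-Lipschitz on
`(-∞, 0]`, and since `E ≤ 1`, the integrand of `Φ` then differs by at most
`‖u - u*‖ / L_m² · ((Ñ + N_M L̃ / L_m) / a · (v² - α₀²) + L̃) · v^(-ν)`, whose integral over
`[α₀, ξ]` is `Φ̃(α₀, ξ) ‖u - u*‖ / α₀^ν`. Finally `0 ≤ Φ(η) ≤ Φ(ξ)`, and on the region
`0 ≤ A ≤ B` the map `(A, B) ↦ (1 + A) / (1 + B)` is `1`-Lipschitz in each variable.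
-/

open intervalIntegral

lemma abs_div_sub_div_le {x x' y y' m X : ℝ} (hm : 0 < m) (hy : m ≤ y) (hy' : m ≤ y')
    (hx' : |x'| ≤ X) : |x / y - x' / y'| ≤ |x - x'| / m + X * |y - y'| / m ^ 2 := by
  have hy0 : 0 < y := hm.trans_le hy
  have hy0' : 0 < y' := hm.trans_le hy'
  have hX : 0 ≤ X := (abs_nonneg _).trans hx'
  have hsplit : x / y - x' / y' = (x - x') / y + x' * (y' - y) / (y * y') := by
    field_simp; ring
  calc |x / y - x' / y'| ≤ |x - x'| / y + |x'| * |y - y'| / (y * y') := by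
        rw [hsplit]
        refine (abs_add_le _ _).trans_eq ?_
        rw [abs_div, abs_div, abs_mul, abs_of_pos hy0, abs_of_pos (mul_pos hy0 hy0'),
          abs_sub_comm y' y]
    _ ≤ |x - x'| / m + X * |y - y'| / m ^ 2 := by
        gcongr ?_ + ?_
        · exact div_le_div_of_nonneg_left (abs_nonneg _) hm hy
        · rw [sq]
          exact div_le_div₀ (by positivity) (by gcongr) (by positivity)
            (mul_le_mul hy hy' hm.le hy0.le)

lemma abs_exp_sub_exp_le_of_nonpos {x y : ℝ} (hx : x ≤ 0) (hy : y ≤ 0) :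
    |exp x - exp y| ≤ |x - y| := by
  have key : ∀ {s t : ℝ}, s ≤ 0 → exp s - exp t ≤ |s - t| := fun {s t} hs =>
    calc exp s - exp t = exp s * (1 - exp (t - s)) := by rw [mul_sub, ← exp_add]; ring_nf
      _ ≤ exp s * |s - t| := by
          gcongr
          linarith [add_one_le_exp (t - s), le_abs_self (s - t)]
      _ ≤ |s - t| := mul_le_of_le_one_left (abs_nonneg _) (exp_le_one_iff.2 hs)
  exact abs_sub_le_iff.2 ⟨key hx, by rw [abs_sub_comm]; exact key hy⟩

lemma abs_one_add_div_one_add_sub_le {A B A' B' : ℝ} (hA : 0 ≤ A) (hAB : A ≤ B) (hA' : 0 ≤ A')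
    (hAB' : A' ≤ B') :
    |(1 + A) / (1 + B) - (1 + A') / (1 + B')| ≤ |A - A'| + |B - B'| := by
  have hB : 1 ≤ 1 + B := by linarith
  have hB' : 0 < 1 + B' := by linarith
  have hsplit : (1 + A) / (1 + B) - (1 + A') / (1 + B')
      = (A - A') / (1 + B) + (1 + A') / (1 + B') * ((B' - B) / (1 + B)) := by
    field_simp; ring
  calc _ ≤ |A - A'| / (1 + B) + (1 + A') / (1 + B') * (|B - B'| / (1 + B)) := by
        rw [hsplit]
        refine (abs_add_le _ _).trans_eq ?_
        rw [abs_div, abs_mul, abs_of_pos (div_pos (by linarith) hB'), abs_div,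
          abs_of_pos (by linarith : 0 < 1 + B), abs_sub_comm B' B]
    _ ≤ |A - A'| + 1 * |B - B'| := by
        gcongr ?_ + ?_
        · exact div_le_self (abs_nonneg _) hB
        · exact mul_le_mul ((div_le_one hB').2 (by linarith)) (div_le_self (abs_nonneg _) hB)
            (by positivity) zero_le_one
    _ = |A - A'| + |B - B'| := by rw [one_mul]

section SupNorm

variable {α₀ ξ : ℝ} {f : ℝ → ℝ}

lemma abs_le_supNorm (hf : ContinuousOn f (Icc α₀ ξ)) {x : ℝ} (hx : x ∈ Icc α₀ ξ) :
    |f x| ≤ supNorm α₀ ξ f := by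
  obtain ⟨C, hC⟩ := isCompact_Icc.exists_bound_of_continuousOn hf
  exact le_ciSup (f := fun η : Icc α₀ ξ => |f η|) ⟨C, by rintro _ ⟨y, rfl⟩; exact hC y y.2⟩
    ⟨x, hx⟩

lemma supNorm_le {C : ℝ} (hαξ : α₀ ≤ ξ) (h : ∀ x ∈ Icc α₀ ξ, |f x| ≤ C) :
    supNorm α₀ ξ f ≤ C :=
  have : Nonempty (Icc α₀ ξ) := ⟨⟨α₀, left_mem_Icc.2 hαξ⟩⟩
  ciSup_le fun x => h x x.2

end SupNorm

lemma PhiTilde_eq_integral {a ν Lm NM Ltil Ntil α₀ ξ : ℝ} (hν1 : ν < 1) (hα₀ : 0 < α₀)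
    (hαξ : α₀ ≤ ξ) :
    PhiTilde a ν Lm NM Ltil Ntil α₀ ξ = α₀ ^ ν / Lm ^ 2 *
      ∫ v in α₀..ξ, ((Ntil + NM * Ltil / Lm) / a * (v ^ 2 - α₀ ^ 2) + Ltil) * v ^ (-ν) := by
  set K := (Ntil + NM * Ltil / Lm) / a
  have hsplit : EqOn (fun v => (K * (v ^ 2 - α₀ ^ 2) + Ltil) * v ^ (-ν))
      (fun v => K * v ^ (2 - ν) + (Ltil - K * α₀ ^ 2) * v ^ (-ν)) (uIcc α₀ ξ) := by
    intro v hv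
    rw [uIcc_of_le hαξ] at hv
    simp only
    rw [sub_eq_add_neg (2 : ℝ), rpow_add (hα₀.trans_le hv.1), rpow_two]
    ring
  have hpow : α₀ ^ (3 - ν) = α₀ ^ 2 * α₀ ^ (1 - ν) := by
    rw [← rpow_two, ← rpow_add hα₀]
    ring_nf
  rw [integral_congr hsplit, integral_add ((intervalIntegrable_rpow' (by linarith)).const_mul _)
      ((intervalIntegrable_rpow' (by linarith)).const_mul _), intervalIntegral.integral_const_mul,
    intervalIntegral.integral_const_mul, integral_rpow (Or.inl (by linarith)),
    integral_rpow (Or.inl (by linarith)), show 2 - ν + 1 = 3 - ν by ring,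
    show -ν + 1 = 1 - ν by ring, PhiTilde, hpow]
  have : 3 - ν ≠ 0 := by linarith
  have : 1 - ν ≠ 0 := by linarith
  field_simp
  ring

structure AdmissibleCoeffs (L N : ℝ → ℝ) (Lm NM Ltil Ntil : ℝ) : Prop where
  continuous_L : Continuous L
  continuous_N : Continuous N
  Lm_pos : 0 < Lm
  Lm_le : ∀ x, Lm ≤ L x
  N_nonneg : ∀ x, 0 ≤ N x
  N_le : ∀ x, N x ≤ NM
  Ltil_nonneg : 0 ≤ Ltil
  Ntil_nonneg : 0 ≤ Ntil
  lipschitz_L : ∀ x y, |L x - L y| ≤ Ltil * |x - y|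
  lipschitz_N : ∀ x y, |N x - N y| ≤ Ntil * |x - y|

namespace AdmissibleCoeffs

variable {a ν α₀ ξ Lm NM Ltil Ntil M : ℝ} {L N u u' : ℝ → ℝ}

lemma L_pos (hc : AdmissibleCoeffs L N Lm NM Ltil Ntil) (x : ℝ) : 0 < L x :=
  hc.Lm_pos.trans_le (hc.Lm_le x)

lemma NM_nonneg (hc : AdmissibleCoeffs L N Lm NM Ltil Ntil) : 0 ≤ NM :=
  (hc.N_nonneg 0).trans (hc.N_le 0)

lemma lipConst_nonneg (hc : AdmissibleCoeffs L N Lm NM Ltil Ntil) :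
    0 ≤ Ntil + NM * Ltil / Lm :=
  have := hc.Lm_pos
  have := hc.Ntil_nonneg
  have := hc.NM_nonneg
  have := hc.Ltil_nonneg
  by positivity

lemma abs_N_div_L_sub_le (hc : AdmissibleCoeffs L N Lm NM Ltil Ntil) (x y : ℝ) :
    |N x / L x - N y / L y| ≤ (Ntil + NM * Ltil / Lm) / Lm * |x - y| := by
  have hLm := hc.Lm_pos
  have hNM : 0 ≤ NM := hc.NM_nonneg
  calc _ ≤ |N x - N y| / Lm + NM * |L x - L y| / Lm ^ 2 :=
        _root_.abs_div_sub_div_le hLm (hc.Lm_le x) (hc.Lm_le y)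
          ((abs_of_nonneg (hc.N_nonneg y)).trans_le (hc.N_le y))
    _ ≤ Ntil * |x - y| / Lm + NM * (Ltil * |x - y|) / Lm ^ 2 := by
        gcongr
        exacts [hc.lipschitz_N x y, hc.lipschitz_L x y]
    _ = (Ntil + NM * Ltil / Lm) / Lm * |x - y| := by field_simp

lemma continuousOn_exponent_integrand (hc : AdmissibleCoeffs L N Lm NM Ltil Ntil) {s : Set ℝ}
    (hu : ContinuousOn u s) :
    ContinuousOn (fun x => x * N (u x) / L (u x)) s :=
  (continuousOn_id.mul (hc.continuous_N.comp_continuousOn hu)).div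
    (hc.continuous_L.comp_continuousOn hu) fun _ _ => (hc.L_pos _).ne'

lemma continuousOn_Efun (hc : AdmissibleCoeffs L N Lm NM Ltil Ntil) (hαξ : α₀ ≤ ξ)
    (hu : ContinuousOn u (Icc α₀ ξ)) :
    ContinuousOn (Efun a L N α₀ u) (Icc α₀ ξ) := by
  have hint := (hc.continuousOn_exponent_integrand hu).integrableOn_Icc (μ := volume)
  rw [← uIcc_of_le hαξ] at hint
  have hprim := continuousOn_primitive_interval hint
  rw [uIcc_of_le hαξ] at hprim
  exact continuous_exp.comp_continuousOn (continuousOn_const.mul hprim)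

lemma intervalIntegrable_Phi_integrand (hc : AdmissibleCoeffs L N Lm NM Ltil Ntil) (hα₀ : 0 < α₀)
    (hαξ : α₀ ≤ ξ) (hu : ContinuousOn u (Icc α₀ ξ)) :
    IntervalIntegrable (fun v => Efun a L N α₀ u v / (v ^ ν * L (u v))) volume α₀ ξ := by
  have hv0 : ∀ v ∈ Icc α₀ ξ, 0 < v := fun v hv => hα₀.trans_le hv.1
  refine ContinuousOn.intervalIntegrable_of_Icc hαξ ?_
  refine (hc.continuousOn_Efun hαξ hu).div ((continuousOn_id.rpow_const fun v hv =>
    Or.inl (hv0 v hv).ne').mul (hc.continuous_L.comp_continuousOn hu)) fun v hv => ?_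
  exact (mul_pos (rpow_pos_of_pos (hv0 v hv) ν) (hc.L_pos _)).ne'

lemma Phi_integrand_nonneg (hc : AdmissibleCoeffs L N Lm NM Ltil Ntil) (hα₀ : 0 ≤ α₀) {v : ℝ}
    (hv : α₀ ≤ v) :
    0 ≤ Efun a L N α₀ u v / (v ^ ν * L (u v)) := by
  have := hc.L_pos (u v)
  have := hα₀.trans hv
  unfold Efun
  positivity

lemma Phi_nonneg (hc : AdmissibleCoeffs L N Lm NM Ltil Ntil) (hα₀ : 0 ≤ α₀) {η : ℝ} (hη : α₀ ≤ η) :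
    0 ≤ Phi a ν L N α₀ u η :=
  mul_nonneg (rpow_nonneg hα₀ ν)
    (integral_nonneg hη fun _ hv => hc.Phi_integrand_nonneg hα₀ hv.1)

lemma Phi_le_Phi (hc : AdmissibleCoeffs L N Lm NM Ltil Ntil) (hα₀ : 0 < α₀)
    (hu : ContinuousOn u (Icc α₀ ξ)) {η : ℝ} (hη : η ∈ Icc α₀ ξ) :
    Phi a ν L N α₀ u η ≤ Phi a ν L N α₀ u ξ :=
  mul_le_mul_of_nonneg_left
    (integral_mono_interval le_rfl hη.1 hη.2
      ((ae_restrict_mem measurableSet_Ioc).mono fun _ hv =>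
        hc.Phi_integrand_nonneg hα₀.le hv.1.le)
      (hc.intervalIntegrable_Phi_integrand hα₀ (hη.1.trans hη.2) hu))
    (rpow_nonneg hα₀.le ν)

lemma Efun_exponent_nonpos (hc : AdmissibleCoeffs L N Lm NM Ltil Ntil) (ha : 0 < a) (hα₀ : 0 ≤ α₀)
    {v : ℝ} (hv : α₀ ≤ v) :
    -(2 / a) * ∫ s in α₀..v, s * N (u s) / L (u s) ≤ 0 := by
  refine mul_nonpos_of_nonpos_of_nonneg (by simp only [neg_nonpos]; positivity)
    (integral_nonneg hv fun s hs => ?_)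
  have := hc.L_pos (u s)
  have := hc.N_nonneg (u s)
  have := hα₀.trans hs.1
  positivity

lemma Efun_le_one (hc : AdmissibleCoeffs L N Lm NM Ltil Ntil) (ha : 0 < a) (hα₀ : 0 ≤ α₀) {v : ℝ}
    (hv : α₀ ≤ v) :
    Efun a L N α₀ u v ≤ 1 :=
  exp_le_one_iff.2 (hc.Efun_exponent_nonpos ha hα₀ hv)

lemma abs_integral_exponent_sub_le (hc : AdmissibleCoeffs L N Lm NM Ltil Ntil) (hα₀ : 0 ≤ α₀)
    (hu : ContinuousOn u (Icc α₀ ξ)) (hu' : ContinuousOn u' (Icc α₀ ξ))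
    (hM : ∀ x ∈ Icc α₀ ξ, |u x - u' x| ≤ M) {v : ℝ} (hv : v ∈ Icc α₀ ξ) :
    |(∫ s in α₀..v, s * N (u s) / L (u s)) - ∫ s in α₀..v, s * N (u' s) / L (u' s)|
      ≤ (Ntil + NM * Ltil / Lm) / Lm * M * ((v ^ 2 - α₀ ^ 2) / 2) := by
  have hint : ∀ w, ContinuousOn w (Icc α₀ ξ) →
      IntervalIntegrable (fun s => s * N (w s) / L (w s)) volume α₀ v := fun w hw =>
    ContinuousOn.intervalIntegrable_of_Icc hv.1
      ((hc.continuousOn_exponent_integrand hw).mono (Icc_subset_Icc_right hv.2))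
  rw [← integral_sub (hint u hu) (hint u' hu'), ← integral_id,
    ← intervalIntegral.integral_const_mul, ← Real.norm_eq_abs]
  refine intervalIntegral.norm_integral_le_of_norm_le hv.1 (ae_of_all _ fun s hs => ?_)
    ((continuous_const.mul continuous_id).intervalIntegrable (μ := volume) _ _)
  have hs0 : 0 ≤ s := hα₀.trans hs.1.le
  calc ‖s * N (u s) / L (u s) - s * N (u' s) / L (u' s)‖
      = s * |N (u s) / L (u s) - N (u' s) / L (u' s)| := by
        rw [Real.norm_eq_abs, mul_div_assoc, mul_div_assoc, ← mul_sub, abs_mul,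
          abs_of_nonneg hs0]
    _ ≤ s * ((Ntil + NM * Ltil / Lm) / Lm * M) := by
        gcongr
        refine (hc.abs_N_div_L_sub_le _ _).trans (mul_le_mul_of_nonneg_left ?_ ?_)
        · exact hM s ⟨hs.1.le, hs.2.trans hv.2⟩
        · exact div_nonneg hc.lipConst_nonneg hc.Lm_pos.le
    _ = (Ntil + NM * Ltil / Lm) / Lm * M * s := by ring

lemma abs_Efun_div_sub_le (hc : AdmissibleCoeffs L N Lm NM Ltil Ntil) (ha : 0 < a)
    (hα₀ : 0 ≤ α₀) (hu : ContinuousOn u (Icc α₀ ξ)) (hu' : ContinuousOn u' (Icc α₀ ξ))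
    (hM : ∀ x ∈ Icc α₀ ξ, |u x - u' x| ≤ M) {v : ℝ} (hv : v ∈ Icc α₀ ξ) :
    |Efun a L N α₀ u v / L (u v) - Efun a L N α₀ u' v / L (u' v)|
      ≤ M / Lm ^ 2 * ((Ntil + NM * Ltil / Lm) / a * (v ^ 2 - α₀ ^ 2) + Ltil) := by
  have hLm := hc.Lm_pos
  have hE : |Efun a L N α₀ u v - Efun a L N α₀ u' v|
      ≤ 2 / a * ((Ntil + NM * Ltil / Lm) / Lm * M * ((v ^ 2 - α₀ ^ 2) / 2)) := by
    refine (abs_exp_sub_exp_le_of_nonpos (hc.Efun_exponent_nonpos ha hα₀ hv.1)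
      (hc.Efun_exponent_nonpos ha hα₀ hv.1)).trans ?_
    rw [← mul_sub, abs_mul, abs_neg, abs_of_pos (by positivity)]
    gcongr
    exact hc.abs_integral_exponent_sub_le hα₀ hu hu' hM hv
  have hE' : |Efun a L N α₀ u' v| ≤ 1 :=
    (abs_of_pos (exp_pos _)).trans_le (hc.Efun_le_one ha hα₀ hv.1)
  calc _ ≤ |Efun a L N α₀ u v - Efun a L N α₀ u' v| / Lm + 1 * |L (u v) - L (u' v)| / Lm ^ 2 :=
        _root_.abs_div_sub_div_le hLm (hc.Lm_le _) (hc.Lm_le _) hE'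
    _ ≤ 2 / a * ((Ntil + NM * Ltil / Lm) / Lm * M * ((v ^ 2 - α₀ ^ 2) / 2)) / Lm
          + 1 * (Ltil * M) / Lm ^ 2 := by
        gcongr
        exact (hc.lipschitz_L _ _).trans (by gcongr; exacts [hc.Ltil_nonneg, hM v hv])
    _ = _ := by field_simp

lemma abs_Phi_integrand_sub_le (hc : AdmissibleCoeffs L N Lm NM Ltil Ntil) (ha : 0 < a)
    (hα₀ : 0 < α₀) (hu : ContinuousOn u (Icc α₀ ξ)) (hu' : ContinuousOn u' (Icc α₀ ξ))
    (hM : ∀ x ∈ Icc α₀ ξ, |u x - u' x| ≤ M) {v : ℝ} (hv : v ∈ Icc α₀ ξ) :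
    |Efun a L N α₀ u v / (v ^ ν * L (u v)) - Efun a L N α₀ u' v / (v ^ ν * L (u' v))|
      ≤ M / Lm ^ 2 * (((Ntil + NM * Ltil / Lm) / a * (v ^ 2 - α₀ ^ 2) + Ltil) * v ^ (-ν)) := by
  have hv0 : 0 < v := hα₀.trans_le hv.1
  have hsplit : Efun a L N α₀ u v / (v ^ ν * L (u v)) - Efun a L N α₀ u' v / (v ^ ν * L (u' v))
      = (Efun a L N α₀ u v / L (u v) - Efun a L N α₀ u' v / L (u' v)) * v ^ (-ν) := by
    have := hc.L_pos (u v)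
    have := hc.L_pos (u' v)
    rw [rpow_neg hv0.le]
    field_simp
  rw [hsplit, abs_mul, abs_of_pos (rpow_pos_of_pos hv0 _), ← mul_assoc]
  gcongr
  exact hc.abs_Efun_div_sub_le ha hα₀.le hu hu' hM hv

lemma abs_Phi_sub_le (hc : AdmissibleCoeffs L N Lm NM Ltil Ntil) (ha : 0 < a) (hν1 : ν < 1)
    (hα₀ : 0 < α₀) (hu : ContinuousOn u (Icc α₀ ξ)) (hu' : ContinuousOn u' (Icc α₀ ξ))
    (hM : ∀ x ∈ Icc α₀ ξ, |u x - u' x| ≤ M) {η : ℝ} (hη : η ∈ Icc α₀ ξ) :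
    |Phi a ν L N α₀ u η - Phi a ν L N α₀ u' η| ≤ PhiTilde a ν Lm NM Ltil Ntil α₀ ξ * M := by
  have hαξ : α₀ ≤ ξ := hη.1.trans hη.2
  have hαη : uIcc α₀ η ⊆ uIcc α₀ ξ := uIcc_subset_uIcc_left (uIcc_of_le hαξ ▸ hη)
  set g := fun v : ℝ => M / Lm ^ 2 *
    (((Ntil + NM * Ltil / Lm) / a * (v ^ 2 - α₀ ^ 2) + Ltil) * v ^ (-ν))
  have hg : IntervalIntegrable g volume α₀ ξ := by
    refine ContinuousOn.intervalIntegrable_of_Icc hαξ (continuousOn_const.mul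
      ((by fun_prop : Continuous _).continuousOn.mul (continuousOn_id.rpow_const fun v hv =>
        Or.inl (hα₀.trans_le hv.1).ne')))
  have hg_nonneg : ∀ v ∈ Ioc α₀ ξ, 0 ≤ g v := fun v hv => by
    have := hc.lipConst_nonneg
    have := hc.Ltil_nonneg
    have := (abs_nonneg _).trans (hM α₀ (left_mem_Icc.2 hαξ))
    have := hα₀.trans hv.1
    have : 0 ≤ v ^ 2 - α₀ ^ 2 := by nlinarith [hv.1]
    positivity
  have hint := fun w (hw : ContinuousOn w (Icc α₀ ξ)) =>
    (hc.intervalIntegrable_Phi_integrand (ν := ν) (a := a) hα₀ hαξ hw).mono_set hαη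
  calc |Phi a ν L N α₀ u η - Phi a ν L N α₀ u' η|
      = α₀ ^ ν * ‖∫ v in α₀..η, (Efun a L N α₀ u v / (v ^ ν * L (u v))
          - Efun a L N α₀ u' v / (v ^ ν * L (u' v)))‖ := by
        rw [Phi, Phi, ← mul_sub, integral_sub (hint u hu) (hint u' hu'), abs_mul,
          abs_of_pos (rpow_pos_of_pos hα₀ ν), Real.norm_eq_abs]
    _ ≤ α₀ ^ ν * ∫ v in α₀..η, g v := by
        gcongr
        exact intervalIntegral.norm_integral_le_of_norm_le hη.1 (ae_of_all _ fun v hv =>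
          hc.abs_Phi_integrand_sub_le ha hα₀ hu hu' hM ⟨hv.1.le, hv.2.trans hη.2⟩)
          (hg.mono_set hαη)
    _ ≤ α₀ ^ ν * ∫ v in α₀..ξ, g v := by
        gcongr
        exact integral_mono_interval le_rfl hη.1 hη.2
          ((ae_restrict_mem measurableSet_Ioc).mono hg_nonneg) hg
    _ = PhiTilde a ν Lm NM Ltil Ntil α₀ ξ * M := by
        rw [intervalIntegral.integral_const_mul, PhiTilde_eq_integral hν1 hα₀ hαξ]
        ring

end AdmissibleCoeffs

theorem stmt_10_general (a ν α₀ ξ : ℝ) (L N : ℝ → ℝ) (Lm LM Nm NM Ltil Ntil p : ℝ)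
    (ha : 0 < a) (hν1 : ν < 1) (hα₀ : 0 < α₀) (hαξ : α₀ < ξ)
    (hp : 0 < p)
    (hLcont : Continuous L) (hNcont : Continuous N)
    (hLm : 0 < Lm) (hNm : 0 < Nm) (hLtil : 0 < Ltil) (hNtil : 0 < Ntil)
    (hL : ∀ x : ℝ, Lm ≤ L x ∧ L x ≤ LM)
    (hN : ∀ x : ℝ, Nm ≤ N x ∧ N x ≤ NM)
    (hLlip : ∀ x y : ℝ, |L x - L y| ≤ Ltil * |x - y|)
    (hNlip : ∀ x y : ℝ, |N x - N y| ≤ Ntil * |x - y|) :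
    ∀ u ustar : ℝ → ℝ, ContinuousOn u (Icc α₀ ξ) → ContinuousOn ustar (Icc α₀ ξ) →
      supNorm α₀ ξ (fun η =>
          (1 + p * Phi a ν L N α₀ u η) / (1 + p * Phi a ν L N α₀ u ξ) -
            (1 + p * Phi a ν L N α₀ ustar η) / (1 + p * Phi a ν L N α₀ ustar ξ)) ≤
        2 * p * PhiTilde a ν Lm NM Ltil Ntil α₀ ξ *
          supNorm α₀ ξ (fun η => u η - ustar η) := by
  intro u ustar hu hustar
  have hc : AdmissibleCoeffs L N Lm NM Ltil Ntil :=
    ⟨hLcont, hNcont, hLm, fun x => (hL x).1, fun x => hNm.le.trans (hN x).1, fun x => (hN x).2,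
      hLtil.le, hNtil.le, hLlip, hNlip⟩
  have hξ : ξ ∈ Icc α₀ ξ := right_mem_Icc.2 hαξ.le
  have hΦ : ∀ η ∈ Icc α₀ ξ, |p * Phi a ν L N α₀ u η - p * Phi a ν L N α₀ ustar η|
      ≤ p * (PhiTilde a ν Lm NM Ltil Ntil α₀ ξ * supNorm α₀ ξ (fun η => u η - ustar η)) :=
    fun η hη => by
      rw [← mul_sub, abs_mul, abs_of_pos hp]
      exact mul_le_mul_of_nonneg_left (hc.abs_Phi_sub_le ha hν1 hα₀ hu hustar
        (fun x hx => abs_le_supNorm (hu.sub hustar) hx) hη) hp.le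
  refine supNorm_le hαξ.le fun η hη => ?_
  have hmono : ∀ w, ContinuousOn w (Icc α₀ ξ) →
      0 ≤ p * Phi a ν L N α₀ w η ∧ p * Phi a ν L N α₀ w η ≤ p * Phi a ν L N α₀ w ξ :=
    fun w hw => ⟨mul_nonneg hp.le (hc.Phi_nonneg hα₀.le hη.1),
      mul_le_mul_of_nonneg_left (hc.Phi_le_Phi hα₀ hw hη) hp.le⟩
  refine (abs_one_add_div_one_add_sub_le (hmono u hu).1 (hmono u hu).2 (hmono ustar hustar).1
    (hmono ustar hustar).2).trans ?_
  linarith [hΦ η hη, hΦ ξ hξ]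

theorem stmt_10 (a ν α₀ ξ : ℝ) (L N : ℝ → ℝ) (Lm LM Nm NM Ltil Ntil p : ℝ)
    (ha : 0 < a) (hν0 : 0 < ν) (hν1 : ν < 1) (hα₀ : 0 < α₀) (hαξ : α₀ < ξ)
    (hp : 0 < p)
    (hLcont : Continuous L) (hNcont : Continuous N)
    (hLm : 0 < Lm) (hNm : 0 < Nm) (hLtil : 0 < Ltil) (hNtil : 0 < Ntil)
    (hL : ∀ x : ℝ, Lm ≤ L x ∧ L x ≤ LM)
    (hN : ∀ x : ℝ, Nm ≤ N x ∧ N x ≤ NM)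
    (hLlip : ∀ x y : ℝ, |L x - L y| ≤ Ltil * |x - y|)
    (hNlip : ∀ x y : ℝ, |N x - N y| ≤ Ntil * |x - y|) :
    ∀ u ustar : ℝ → ℝ, ContinuousOn u (Icc α₀ ξ) → ContinuousOn ustar (Icc α₀ ξ) →
      supNorm α₀ ξ (fun η =>
          (1 + p * Phi a ν L N α₀ u η) / (1 + p * Phi a ν L N α₀ u ξ) -
            (1 + p * Phi a ν L N α₀ ustar η) / (1 + p * Phi a ν L N α₀ ustar ξ)) ≤
        2 * p * PhiTilde a ν Lm NM Ltil Ntil α₀ ξ *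
          supNorm α₀ ξ (fun η => u η - ustar η) :=
  stmt_10_general a ν α₀ ξ L N Lm LM Nm NM Ltil Ntil p ha hν1 hα₀ hαξ hp hLcont hNcont hLm hNm hLtil
    hNtil hL hN hLlip hNlip
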